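/- arXiv:2012.04020 — 3 statements merged into one kernel-verified Lean document; each statement's English description precedes it below -/
import Mathlib

section
/- Let M be a real symmetric n×n matrix, and let C be the n×k characteristic matrix of a partition of {1,...,n} into k nonempty blocks (C has (i,j)-entry 1 if i is in block j and 0 otherwise). Suppose B is a k×k matrix with MC = CB (the partition is equitable). Then the characteristic polynomial of B divides the characteristic polynomial of M. -/
/-- If `C` is the characteristic matrix of a partition of `{1,…,n}` into `k`
nonempty blocks (given by the block-assignment map `blk`, surjective since blocks are nonempty),
`M` is real symmetric, and `MC = CB`, then the characteristic polynomial of `B` divides that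
of `M`. -/
theorem divisor_charpoly_dvd
    {n k : ℕ} (M : Matrix (Fin n) (Fin n) ℝ) (hM : M.IsSymm)
    (blk : Fin n → Fin k) (hblk : Function.Surjective blk)
    (C : Matrix (Fin n) (Fin k) ℝ)
    (hC : C = Matrix.of fun i j => if blk i = j then (1 : ℝ) else 0)
    (B : Matrix (Fin k) (Fin k) ℝ) (hB : M * C = C * B) :
    B.charpoly ∣ M.charpoly := by
  classical
  rcases Nat.eq_zero_or_pos k with hk | hk
  · subst hk
    have hB1 : B.charpoly = 1 := by
      simp [Matrix.charpoly, Matrix.det_isEmpty]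
    simp [hB1]
  -- a section of blk
  set s : Fin k → Fin n := Function.surjInv hblk with hs_def
  have hs : ∀ j, blk (s j) = j := fun j => Function.surjInv_eq hblk j
  have hsinj : Function.Injective s := fun a b h => by rw [← hs a, h, hs b]
  set p : Fin n → Prop := fun i => s (blk i) = i with hp_def
  have hps : ∀ j, p (s j) := fun j => by simp only [hp_def, hs]
  set N : Matrix (Fin n) (Fin n) ℝ :=
    Matrix.of (fun i i' => if p i' ∧ ¬ p i ∧ blk i = blk i' then (1:ℝ) else 0) with hN_def
  set Q := (1 : Matrix (Fin n) (Fin n) ℝ) + N with hQ_def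
  set Rm := (1 : Matrix (Fin n) (Fin n) ℝ) - N with hRm_def
  have hN2 : N * N = 0 := by
    ext i i'
    simp only [Matrix.mul_apply, Matrix.zero_apply]
    apply Finset.sum_eq_zero
    intro l _
    by_cases h1 : p l
    · have : N l i' = 0 := by
        simp only [hN_def, Matrix.of_apply, ite_eq_right_iff]; tauto
      simp [this]
    · have : N i l = 0 := by
        simp only [hN_def, Matrix.of_apply, ite_eq_right_iff]; tauto
      simp [this]
  have hQR : Q * Rm = 1 := by
    rw [hQ_def, hRm_def, add_mul, mul_sub, mul_sub, hN2]
    simp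
  have hRQ : Rm * Q = 1 := by
    rw [hQ_def, hRm_def, sub_mul, mul_add, mul_add, hN2]
    simp
  set S : Matrix (Fin n) (Fin k) ℝ :=
    Matrix.of (fun i j => if i = s j then (1:ℝ) else 0) with hS_def
  -- columns of Q at positions s j are columns of C
  have hQcol : ∀ i j, Q i (s j) = C i j := by
    intro i j
    have hNe : N i (s j) = if ¬ p i ∧ blk i = j then (1:ℝ) else 0 := by
      simp only [hN_def, Matrix.of_apply, hs, eq_true (hps j), true_and]
    by_cases hbi : blk i = j
    · by_cases hpi : p i
      · have hieq : i = s j := by rw [← hpi, hbi]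
        subst hieq
        simp [hQ_def, hNe, eq_true (hps j), hC, hbi]
      · have hne : i ≠ s j := fun h => hpi (h ▸ hps j)
        simp [hQ_def, hNe, hpi, hbi, hC, Matrix.one_apply_ne hne]
    · have hne : i ≠ s j := fun h => hbi (by rw [h, hs])
      simp [hQ_def, hNe, hbi, hC, Matrix.one_apply_ne hne]
  have hQS : Q * S = C := by
    ext i j
    rw [Matrix.mul_apply]
    simp only [hS_def, Matrix.of_apply, mul_ite, mul_one, mul_zero]
    rw [Finset.sum_ite_eq' Finset.univ (s j) (fun l => Q i l)]
    simp [hQcol i j]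
  set T := Rm * M * Q with hT_def
  have hRC : Rm * C = S := by rw [← hQS, ← Matrix.mul_assoc, hRQ, Matrix.one_mul]
  have hTS : T * S = S * B := by
    rw [hT_def, Matrix.mul_assoc, Matrix.mul_assoc, hQS, hB, ← Matrix.mul_assoc, hRC]
  have hTcol : ∀ i j, T i (s j) = ∑ j', (if i = s j' then (1:ℝ) else 0) * B j' j := by
    intro i j
    have h1 : (T * S) i j = T i (s j) := by
      rw [Matrix.mul_apply]
      simp only [hS_def, Matrix.of_apply, mul_ite, mul_one, mul_zero]
      rw [Finset.sum_ite_eq' Finset.univ (s j) (fun l => T i l)]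
      simp
    rw [← h1, hTS, Matrix.mul_apply]
    simp [hS_def]
  set b : Fin n → ℕ := fun i => if p i then 0 else 1 with hb_def
  have hb0 : ∀ i, p i → b i = 0 := by
    intro i h
    simp only [hb_def]
    exact if_pos h
  have hb1 : ∀ i, ¬ p i → b i = 1 := by
    intro i h
    simp only [hb_def]
    exact if_neg h
  have hBT : T.BlockTriangular b := by
    intro i i' hlt
    by_cases hpi' : p i'
    · by_cases hpi : p i
      · rw [hb0 _ hpi, hb0 _ hpi'] at hlt; omega
      · have hi' : i' = s (blk i') := hpi'.symm
        rw [hi', hTcol]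
        apply Finset.sum_eq_zero
        intro j' _
        have : i ≠ s j' := fun h => hpi (h ▸ hps j')
        simp [this]
    · by_cases hpi : p i
      · rw [hb1 _ hpi', hb0 _ hpi] at hlt; omega
      · rw [hb1 _ hpi', hb1 _ hpi] at hlt; omega
  have hprod := hBT.charpoly
  -- the square block at 0 is B, reindexed
  have hbp : ∀ i, b i = 0 ↔ p i := by
    intro i
    by_cases hpi : p i <;> simp [hb_def, hpi]
  set e : {i // b i = 0} ≃ Fin k :=
    { toFun := fun x => blk x.1
      invFun := fun j => ⟨s j, (hbp (s j)).2 (hps j)⟩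
      left_inv := fun x => Subtype.ext ((hbp x.1).1 x.2)
      right_inv := fun j => hs j } with he_def
  have hblock : T.toSquareBlock b 0 = (Matrix.reindex e.symm e.symm) B := by
    ext x y
    have hx : s (blk x.1) = x.1 := (hbp x.1).1 x.2
    have hy : s (blk y.1) = y.1 := (hbp y.1).1 y.2
    have : T x.1 (s (blk y.1)) = B (blk x.1) (blk y.1) := by
      rw [hTcol]
      have : ∀ j', (if x.1 = s j' then (1:ℝ) else 0) = if blk x.1 = j' then 1 else 0 := by
        intro j'
        by_cases h : blk x.1 = j'
        · have hx' : x.1 = s j' := by rw [← h, hx]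
          simp [h, hx', hs]
        · have : x.1 ≠ s j' := fun hh => h (by rw [← hx] at hh; exact hsinj hh)
          simp [h, this]
      simp only [this, ite_mul, one_mul, zero_mul]
      rw [Finset.sum_ite_eq Finset.univ (blk x.1) (fun j' => B j' (blk y.1))]
      simp
    rw [hy] at this
    exact this
  have hblockchar : (T.toSquareBlock b 0).charpoly = B.charpoly := by
    rw [hblock, Matrix.charpoly_reindex]
  have h0mem : (0:ℕ) ∈ Finset.image b Finset.univ := by
    refine Finset.mem_image.2 ⟨s ⟨0, hk⟩, Finset.mem_univ _, ?_⟩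
    exact (hbp _).2 (hps _)
  have hdvdT : B.charpoly ∣ T.charpoly := by
    rw [hprod, ← hblockchar]
    exact Finset.dvd_prod_of_mem _ h0mem
  -- charpoly T = charpoly M by similarity
  have hcharT : T.charpoly = M.charpoly := by
    set φ : Matrix (Fin n) (Fin n) ℝ →+* Matrix (Fin n) (Fin n) (Polynomial ℝ) :=
      (Polynomial.C : ℝ →+* Polynomial ℝ).mapMatrix with hφ_def
    have key : Matrix.charmatrix T = φ Rm * Matrix.charmatrix M * φ Q := by
      rw [Matrix.charmatrix, Matrix.charmatrix]
      have hcomm : φ Rm * Matrix.scalar (Fin n) (Polynomial.X) * φ Q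
          = Matrix.scalar (Fin n) (Polynomial.X) := by
        rw [(Matrix.scalar_commute (Polynomial.X) (fun r => Commute.all _ r) (φ Rm)).symm.eq,
          mul_assoc, ← map_mul φ, hRQ, _root_.map_one φ, mul_one]
      rw [mul_sub, sub_mul, hcomm, ← map_mul φ, ← map_mul φ, hT_def]
    rw [Matrix.charpoly, key, Matrix.det_mul, Matrix.det_mul, Matrix.charpoly]
    have h1 : (φ Rm).det * (φ Q).det = 1 := by
      rw [← Matrix.det_mul, ← map_mul φ, hRQ, _root_.map_one φ, Matrix.det_one]
    rw [mul_right_comm, h1, one_mul]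
  rwa [hcharT] at hdvdT
end

section
/- Let M be a real symmetric n×n matrix with equitable partition (MC = CB), and let μ be an eigenvalue of B whose geometric multiplicity for B equals its multiplicity for M. Then the μ-core vertex set of M is exactly the union of blocks V_i over indices i such that some μ-eigenvector of B has a nonzero i-th entry. -/
/-!
The characteristic matrix `C` of the partition sends `x` to `x ∘ blk`, so it is injective and,
by `M C = C B`, maps the `μ`-eigenspace of `B` into that of `M`. Equality of dimensions makes this
map onto, so the `μ`-eigenvectors of `M` are exactly the vectors `x ∘ blk` with `x` a
`μ`-eigenvector of `B`, and `(x ∘ blk) v = x (blk v)`.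
-/

open Matrix Module Module.End Function

lemma Matrix.of_ite_eq_mulVec {m k R : Type*} [Fintype k] [DecidableEq k] [NonAssocSemiring R]
    (blk : m → k) (x : k → R) :
    (of fun i j => if blk i = j then (1 : R) else 0) *ᵥ x = x ∘ blk := by
  ext i
  simp [mulVec, dotProduct]

lemma Module.End.map_eigenspace_le_of_comp_eq {K V W : Type*} [CommRing K] [AddCommGroup V]
    [Module K V] [AddCommGroup W] [Module K W] {f : End K V} {g : End K W} {c : V →ₗ[K] W}
    (h : g ∘ₗ c = c ∘ₗ f) (μ : K) :
    (eigenspace f μ).map c ≤ eigenspace g μ := by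
  rintro _ ⟨x, hx, rfl⟩
  rw [SetLike.mem_coe, mem_eigenspace_iff] at hx
  rw [mem_eigenspace_iff, ← LinearMap.comp_apply, h, LinearMap.comp_apply, hx, map_smul]

lemma Module.End.map_eigenspace_eq_of_comp_eq {K V W : Type*} [Field K] [AddCommGroup V]
    [Module K V] [AddCommGroup W] [Module K W] [FiniteDimensional K W]
    {f : End K V} {g : End K W} {c : V →ₗ[K] W} (h : g ∘ₗ c = c ∘ₗ f)
    (hc : Function.Injective c) (μ : K)
    (hrank : finrank K (eigenspace f μ) = finrank K (eigenspace g μ)) :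
    (eigenspace f μ).map c = eigenspace g μ :=
  Submodule.eq_of_le_of_finrank_eq (map_eigenspace_le_of_comp_eq h μ)
    ((Submodule.equivMapOfInjective c hc _).finrank_eq.symm.trans hrank)

lemma Matrix.exists_eigenvector_apply_ne_zero_iff {n R : Type*} [Fintype n] [DecidableEq n]
    [CommRing R] (A : Matrix n n R) (μ : R) (j : n) :
    (∃ y : n → R, y ≠ 0 ∧ A *ᵥ y = μ • y ∧ y j ≠ 0) ↔
      ∃ y ∈ eigenspace (toLin' A) μ, y j ≠ 0 := by
  simp only [mem_eigenspace_iff, toLin'_apply]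
  constructor
  · rintro ⟨y, -, hy, hyj⟩
    exact ⟨y, hy, hyj⟩
  · rintro ⟨y, hy, hyj⟩
    exact ⟨y, fun h ↦ hyj (by simp [h]), hy, hyj⟩

theorem core_vertices_eq_union_of_blocks_general
    {n k : ℕ} (M : Matrix (Fin n) (Fin n) ℝ)
    (blk : Fin n → Fin k) (hblk : Function.Surjective blk)
    (C : Matrix (Fin n) (Fin k) ℝ)
    (hC : C = Matrix.of fun i j => if blk i = j then (1 : ℝ) else 0)
    (B : Matrix (Fin k) (Fin k) ℝ) (hB : M * C = C * B)
    (μ : ℝ)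
    (hmult : Module.finrank ℝ (Module.End.eigenspace (Matrix.toLin' B) μ) =
             Module.finrank ℝ (Module.End.eigenspace (Matrix.toLin' M) μ))
    (CVμ : Set (Fin n))
    (hCVμ : CVμ = {j : Fin n | ∃ y : Fin n → ℝ, y ≠ 0 ∧ M.mulVec y = μ • y ∧ y j ≠ 0}) :
    CVμ = {v : Fin n | ∃ x : Fin k → ℝ, x ≠ 0 ∧ B.mulVec x = μ • x ∧ x (blk v) ≠ 0} := by
  have hCx : ∀ x, toLin' C x = x ∘ blk := fun x ↦ by rw [toLin'_apply, hC, of_ite_eq_mulVec]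
  have hCinj : Injective (toLin' C) := fun x y hxy ↦
    hblk.injective_comp_right (by simpa only [hCx] using hxy)
  have hcomm : toLin' M ∘ₗ toLin' C = toLin' C ∘ₗ toLin' B := by
    rw [← toLin'_mul, hB, toLin'_mul]
  ext v
  simp only [hCVμ, Set.mem_ofPred_eq, exists_eigenvector_apply_ne_zero_iff,
    ← map_eigenspace_eq_of_comp_eq hcomm hCinj μ hmult, Submodule.mem_map,
    exists_exists_and_eq_and, hCx, Function.comp_apply]

/-- For an equitable partition of a real symmetric matrix `M` (`MC = CB`) and an
eigenvalue `μ` of `B` whose geometric multiplicity for `B` equals its multiplicity for `M`,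
the `μ`-core vertex set of `M` is exactly the union of the blocks whose index carries a nonzero
entry of some `μ`-eigenvector of `B`. -/
theorem core_vertices_eq_union_of_blocks
    {n k : ℕ} (M : Matrix (Fin n) (Fin n) ℝ) (hM : M.IsSymm)
    (blk : Fin n → Fin k) (hblk : Function.Surjective blk)
    (C : Matrix (Fin n) (Fin k) ℝ)
    (hC : C = Matrix.of fun i j => if blk i = j then (1 : ℝ) else 0)
    (B : Matrix (Fin k) (Fin k) ℝ) (hB : M * C = C * B)
    (μ : ℝ) (hμ : ∃ x : Fin k → ℝ, x ≠ 0 ∧ B.mulVec x = μ • x)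
    (hmult : Module.finrank ℝ (Module.End.eigenspace (Matrix.toLin' B) μ) =
             Module.finrank ℝ (Module.End.eigenspace (Matrix.toLin' M) μ))
    (CVμ : Set (Fin n))
    (hCVμ : CVμ = {j : Fin n | ∃ y : Fin n → ℝ, y ≠ 0 ∧ M.mulVec y = μ • y ∧ y j ≠ 0}) :
    CVμ = {v : Fin n | ∃ x : Fin k → ℝ, x ≠ 0 ∧ B.mulVec x = μ • x ∧ x (blk v) ≠ 0} :=
  core_vertices_eq_union_of_blocks_general M blk hblk C hC B hB μ hmult CVμ hCVμ
end

section
/- Let V be a finite set of size n partitioned into nonempty blocks {V_0, V_1, ..., V_D} with |V_0| = k and 1 ≤ k < n, and let I = −∑_{i=0}^D (|V_i|/n)·log(|V_i|/n). Then I equals the lower bound −(k/n)·log(k/n) − ((n−k)/n)·log((n−k)/n) if and only if D = 1 (i.e., the partition has exactly two blocks). -/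
/-! Write `pᵢ = |Vᵢ|/n`. With at least two positive weights each `pᵢ` lies strictly below their
sum, so strict monotonicity of `log` gives `∑ pᵢ log pᵢ < (∑ pᵢ) log (∑ pᵢ)`. Applied to the blocks
other than `V₀`, whose weights sum to `(n - k)/n`, this puts `I` strictly above the two-block value
once `D ≥ 2`; for `D = 1` the two expressions coincide, and `D = 0` is excluded by `k < n`. -/

open Real Finset

lemma Real.sum_mul_log_lt_mul_log_sum {ι : Type*} {s : Finset ι} {w : ι → ℝ}
    (hs : 1 < #s) (hw : ∀ i ∈ s, 0 < w i) :
    ∑ i ∈ s, w i * log (w i) < (∑ i ∈ s, w i) * log (∑ i ∈ s, w i) := by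
  have hlt_sum : ∀ i ∈ s, w i < ∑ j ∈ s, w j := by
    intro i hi
    obtain ⟨j, hj, hji⟩ := exists_mem_ne hs i
    exact single_lt_sum hji hi hj (hw j hj) fun l hl _ => (hw l hl).le
  calc ∑ i ∈ s, w i * log (w i)
      < ∑ i ∈ s, w i * log (∑ j ∈ s, w j) :=
        sum_lt_sum_of_nonempty (card_pos.mp (by omega)) fun i hi =>
          mul_lt_mul_of_pos_left (log_lt_log (hw i hi) (hlt_sum i hi)) (hw i hi)
    _ = (∑ i ∈ s, w i) * log (∑ i ∈ s, w i) := (sum_mul ..).symm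

lemma Fin.sum_mul_log_eq_head_add_tail_iff {D : ℕ} (hD : D ≠ 0) {w : Fin (D + 1) → ℝ}
    (hw : ∀ i, 0 < w i) :
    ∑ i, w i * log (w i)
        = w 0 * log (w 0) + (∑ i : Fin D, w i.succ) * log (∑ i : Fin D, w i.succ) ↔ D = 1 := by
  rw [Fin.sum_univ_succ, add_right_inj]
  constructor
  · intro heq
    by_contra hD1
    have hcard : 1 < #(univ : Finset (Fin D)) := by rw [card_univ, Fintype.card_fin]; omega
    exact (Real.sum_mul_log_lt_mul_log_sum hcard fun i _ => hw i.succ).ne heq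
  · rintro rfl
    simp only [Fin.sum_univ_one]

theorem entropy_eq_lower_bound_iff_two_blocks_general
    {V : Type*} [Fintype V] [DecidableEq V] (n : ℕ) (hn : n = Fintype.card V)
    (D : ℕ) (P : Fin (D + 1) → Finset V)
    (hPne : ∀ i, (P i).Nonempty)
    (hPdisj : ∀ i i', i ≠ i' → Disjoint (P i) (P i'))
    (hPcover : Finset.univ.biUnion P = Finset.univ)
    (k : ℕ) (hk : (P 0).card = k) (hkn : k < n)
    (I : ℝ) (hI : I = -(∑ i, ((P i).card : ℝ) / n * Real.log (((P i).card : ℝ) / n))) :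
    I = -(k / n : ℝ) * Real.log ((k : ℝ) / n)
          - (((n : ℝ) - k) / n) * Real.log (((n : ℝ) - k) / n) ↔ D = 1 := by
  have hn_pos : (0 : ℝ) < n := by exact_mod_cast (Nat.zero_le k).trans_lt hkn
  have hsum : k + ∑ i : Fin D, (P i.succ).card = n := by
    rw [← hk, ← Fin.sum_univ_succ fun i => #(P i), hn, ← card_univ, ← hPcover,
      card_biUnion fun i _ i' _ h => hPdisj i i' h]
  have hD : D ≠ 0 := by
    rintro rfl
    simp only [univ_eq_empty, sum_empty] at hsum
    omega
  have htail : ∑ i : Fin D, ((P i.succ).card : ℝ) / n = ((n : ℝ) - k) / n := by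
    rw [← sum_div, ← hsum]
    push_cast
    ring
  have hw : ∀ i, (0 : ℝ) < (P i).card / n := fun i =>
    div_pos (by exact_mod_cast (hPne i).card_pos) hn_pos
  rw [hI, ← Fin.sum_mul_log_eq_head_add_tail_iff hD hw, htail, hk]
  constructor <;> intro h <;> linarith

/-- For a partition `{V_0, …, V_D}` of an `n`-set into nonempty blocks with
`|V_0| = k`, `1 ≤ k < n`, the entropy `I` equals the two-block lower bound
`−(k/n)·log (k/n) − ((n−k)/n)·log ((n−k)/n)` if and only if `D = 1`. -/
theorem entropy_eq_lower_bound_iff_two_blocks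
    {V : Type*} [Fintype V] [DecidableEq V] (n : ℕ) (hn : n = Fintype.card V)
    (D : ℕ) (P : Fin (D + 1) → Finset V)
    (hPne : ∀ i, (P i).Nonempty)
    (hPdisj : ∀ i i', i ≠ i' → Disjoint (P i) (P i'))
    (hPcover : Finset.univ.biUnion P = Finset.univ)
    (k : ℕ) (hk : (P 0).card = k) (hk1 : 1 ≤ k) (hkn : k < n)
    (I : ℝ) (hI : I = -(∑ i, ((P i).card : ℝ) / n * Real.log (((P i).card : ℝ) / n))) :
    I = -(k / n : ℝ) * Real.log ((k : ℝ) / n)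
          - (((n : ℝ) - k) / n) * Real.log (((n : ℝ) - k) / n) ↔ D = 1 :=
  entropy_eq_lower_bound_iff_two_blocks_general n hn D P hPne hPdisj hPcover k hk hkn I hI
end
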